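/- Every closed β-normal formula is propositional: if a formula s has no free variables and no subterm of s is a β-redex, then s is generated by the grammar s ::= x | ⊥ | s→s with x ranging over variables of type B (and in fact s contains no variables at all). -/
import Mathlib


namespace PTT


/-- Simple types over a single base type `B`. -/
inductive Ty : Type
  | base : Ty
  | arrow : Ty → Ty → Ty
deriving DecidableEq

/-- Names: the constants `⊥` and `→`, and variables (an index together with a type). -/
inductive Name : Type
  | bot : Name
  | imp : Name
  | var : ℕ → Ty → Name
deriving DecidableEq

/-- The type of a name. -/
def Name.ty : Name → Ty
  | .bot => .base
  | .imp => .arrow .base (.arrow .base .base)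
  | .var _ σ => σ

/-- Terms: names, abstraction over a variable, application. -/
inductive Tm : Type
  | name : Name → Tm
  | lam : ℕ → Ty → Tm → Tm
  | app : Tm → Tm → Tm
deriving DecidableEq

/-- The term `⊥`. -/
def botTm : Tm := .name .bot

/-- The variable `(n, σ)` as a term. -/
def vr (n : ℕ) (σ : Ty) : Tm := .name (.var n σ)

/-- Implication `s → t`. -/
def impTm (s t : Tm) : Tm := .app (.app (.name .imp) s) t

/-- `⊤ := ⊥ → ⊥`. -/
def topTm : Tm := impTm botTm botTm

/-- `¬ s := s → ⊥`. -/
def negTm (s : Tm) : Tm := impTm s botTm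

/-- `s ∨ t := (s → t) → t`. -/
def orTm (s t : Tm) : Tm := impTm (impTm s t) t

/-- `s ∧ t := ¬(¬s ∨ ¬t)`. -/
def andTm (s t : Tm) : Tm := negTm (orTm (negTm s) (negTm t))

/-- `s ≡ t := (s → t) ∧ (t → s)`. -/
def equivTm (s t : Tm) : Tm := andTm (impTm s t) (impTm t s)

/-- The typing relation. -/
inductive HasTy : Tm → Ty → Prop
  | name (x : Name) : HasTy (.name x) x.ty
  | lam {n σ s τ} : HasTy s τ → HasTy (.lam n σ s) (.arrow σ τ)
  | app {s t σ τ} : HasTy s (.arrow σ τ) → HasTy t σ → HasTy (.app s t) τ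

/-- Free variables of a term. -/
def fv : Tm → Finset (ℕ × Ty)
  | .name (.var n σ) => {(n, σ)}
  | .name _ => ∅
  | .lam n σ s => (fv s).erase (n, σ)
  | .app s t => fv s ∪ fv t

/-- A term is closed if it has no free variables. -/
def Closed (s : Tm) : Prop := fv s = ∅

/-- Capture-free parallel substitution (bound variables are renamed). -/
def substAux (ρ : ℕ × Ty → Tm) : Tm → Tm
  | .name (.var n σ) => ρ (n, σ)
  | .name x => .name x
  | .app s t => .app (substAux ρ s) (substAux ρ t)
  | .lam n σ s =>
      let used : Finset ℕ :=
        ((fv s).erase (n, σ)).biUnion (fun p => (fv (ρ p)).image Prod.fst)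
      let m : ℕ := used.sup id + 1
      .lam m σ (substAux (Function.update ρ (n, σ) (vr m σ)) s)

/-- Capture-free substitution `s[(n,σ) := t]`. -/
def subst (s : Tm) (n : ℕ) (σ : Ty) (t : Tm) : Tm :=
  substAux (Function.update (fun p => vr p.1 p.2) (n, σ) t) s

/-- Contexts: terms with exactly one hole (possibly under binders). -/
inductive Ctx : Type
  | hole : Ctx
  | lam : ℕ → Ty → Ctx → Ctx
  | appL : Ctx → Tm → Ctx
  | appR : Tm → Ctx → Ctx

/-- Filling the hole of a context with a term (capturing is allowed). -/
def Ctx.fill : Ctx → Tm → Tm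
  | .hole, s => s
  | .lam n σ C, s => .lam n σ (C.fill s)
  | .appL C t, s => .app (C.fill s) t
  | .appR t C, s => .app t (C.fill s)

/-- `C` captures the variable `p` if the hole of `C` lies below a binder for `p`. -/
def Ctx.captures : Ctx → ℕ × Ty → Prop
  | .hole, _ => False
  | .lam n σ C, p => p = (n, σ) ∨ C.captures p
  | .appL C _, p => C.captures p
  | .appR _ C, p => C.captures p

/-- `C` is admissible for `A` if it captures no variable free in `A`. -/
def Ctx.Admissible (C : Ctx) (A : Finset Tm) : Prop :=
  ∀ p ∈ A.biUnion fv, ¬ C.captures p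

/-- `s` is a subterm of `t`. -/
def Subterm (s t : Tm) : Prop := ∃ C : Ctx, C.fill s = t

/-- β-redexes. -/
def IsBetaRedex : Tm → Prop
  | .app (.lam _ _ _) _ => True
  | _ => False

/-- A term is β-normal if none of its subterms is a β-redex. -/
def BetaNormal (t : Tm) : Prop := ∀ s, Subterm s t → ¬ IsBetaRedex s

/-- Lambda equivalence: the least equivalence on well-typed terms containing
α-, β-, η-conversion and closed under arbitrary contexts. -/
inductive LamEq : Tm → Tm → Prop
  | refl {s σ} : HasTy s σ → LamEq s s
  | symm {s t} : LamEq s t → LamEq t s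
  | trans {s t u} : LamEq s t → LamEq t u → LamEq s u
  | alpha {n m σ s τ} : HasTy (.lam n σ s) τ → (m, σ) ∉ fv s →
      LamEq (.lam n σ s) (.lam m σ (subst s n σ (vr m σ)))
  | beta {n σ s t τ} : HasTy (.app (.lam n σ s) t) τ →
      LamEq (.app (.lam n σ s) t) (subst s n σ t)
  | eta {n σ s τ} : HasTy (.lam n σ (.app s (vr n σ))) τ → (n, σ) ∉ fv s →
      LamEq (.lam n σ (.app s (vr n σ))) s
  | ctx {s t σ} (C : Ctx) : LamEq s t → HasTy (C.fill s) σ → LamEq (C.fill s) (C.fill t)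

/-- The standard set-theoretic interpretation of types: `B` is interpreted as the
two truth values (`Bool`), functional types as full function spaces. -/
def Ty.sem : Ty → Type
  | .base => Bool
  | .arrow σ τ => σ.sem → τ.sem

def Ty.semDefault : (σ : Ty) → σ.sem
  | .base => false
  | .arrow _ τ => fun _ => τ.semDefault

instance (σ : Ty) : Inhabited σ.sem := ⟨σ.semDefault⟩

noncomputable instance Ty.semFintype : (σ : Ty) → Fintype σ.sem
  | .base => inferInstanceAs (Fintype Bool)
  | .arrow σ τ =>
      letI := Ty.semFintype σ
      letI := Ty.semFintype τ
      letI := Classical.decEq σ.sem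
      inferInstanceAs (Fintype (σ.sem → τ.sem))

def Ty.semCast {σ τ : Ty} (h : σ = τ) (v : σ.sem) : τ.sem := h ▸ v

/-- An interpretation assigns to every variable a value of the corresponding type
(the constants `⊥` and `→` have their values fixed). -/
def Interp : Type := ℕ → (σ : Ty) → σ.sem

def Interp.update (I : Interp) (n : ℕ) (σ : Ty) (v : σ.sem) : Interp :=
  fun m τ => if h : m = n ∧ τ = σ then Ty.semCast h.2.symm v else I m τ

/-- Type inference. -/
def typeOf : Tm → Option Ty
  | .name x => some x.ty
  | .lam _ σ s => (typeOf s).map (Ty.arrow σ)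
  | .app s t =>
      match typeOf s, typeOf t with
      | some (.arrow σ τ), some σ' => if σ = σ' then some τ else none
      | _, _ => none

/-- The canonical extension `Î` of an interpretation to all terms: `eval I s σ`
is the value of `s` at type `σ` (on well-typed terms this is the usual
denotation; junk default values are used at type mismatches). -/
def eval (I : Interp) : Tm → (σ : Ty) → σ.sem
  | .name (.var n τ), σ => if h : τ = σ then Ty.semCast h (I n τ) else default
  | .name .bot, σ =>
      match σ with
      | .base => false
      | _ => default
  | .name .imp, σ =>
      match σ with
      | .arrow .base (.arrow .base .base) => fun a b => !a || b
      | _ => default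
  | .app s t, σ =>
      match typeOf t with
      | some τ => eval I s (.arrow τ σ) (eval I t τ)
      | none => default
  | .lam n τ s, σ =>
      match σ with
      | .base => default
      | .arrow σ₁ σ₂ =>
          if h : σ₁ = τ then
            fun a => eval (I.update n τ (Ty.semCast h a)) s σ₂
          else default

/-- `I` satisfies the formula `s` if `Î s = 1`. -/
def Satisfies (I : Interp) (s : Tm) : Prop := eval I s .base = true

/-- A formula is valid if every interpretation satisfies it. -/
def ValidFml (s : Tm) : Prop := ∀ I : Interp, Satisfies I s

/-- A sequent `A ⇒ s` is valid if every interpretation satisfying `A` satisfies `s`. -/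
def ValidSeq (A : Finset Tm) (s : Tm) : Prop :=
  ∀ I : Interp, (∀ t ∈ A, Satisfies I t) → Satisfies I s

/-- Finite disjunction (the empty disjunction is `⊥`). -/
def orList : List Tm → Tm
  | [] => botTm
  | [s] => s
  | s :: l => orTm s (orList l)

/-- Finite conjunction (the empty conjunction is `⊤`). -/
def andList : List Tm → Tm
  | [] => topTm
  | [s] => s
  | s :: l => andTm s (andList l)

/-- The argument types of a type (every type has the form `σ₁…σₙB`). -/
def Ty.args : Ty → List Ty
  | .base => []
  | .arrow σ τ => σ :: τ.args

/-- Tuples of values along a list of types. -/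
def Tup : List Ty → Type
  | [] => PUnit
  | σ :: l => σ.sem × Tup l

noncomputable instance TupFintype : (l : List Ty) → Fintype (Tup l)
  | [] => inferInstanceAs (Fintype PUnit)
  | σ :: l =>
      letI := TupFintype l
      inferInstanceAs (Fintype (σ.sem × Tup l))

/-- Applying a function value to a tuple of arguments (the result type is `B`). -/
def Ty.applyTup : (σ : Ty) → σ.sem → Tup σ.args → Bool
  | .base, a, _ => a
  | .arrow _ τ, f, p => τ.applyTup (f p.1) p.2

/-- Quote/identity data for each type in a list: a quote function and the term `≐`. -/
def ArgData : List Ty → Type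
  | [] => PUnit
  | σ :: l => ((σ.sem → Tm) × Tm) × ArgData l

/-- The conjunction list `x_k ≐_{σ_k} (↓_{σ_k} b_k), …` for a tuple `b`. -/
def eqConj : (l : List Ty) → ArgData l → ℕ → Tup l → List Tm
  | [], _, _, _ => []
  | σ :: l, (d, ds), k, (b, bs) =>
      (.app (.app d.2 (vr k σ)) (d.1 b)) :: eqConj l ds (k + 1) bs

/-- `λ x_k : σ_k. …` binding one variable for each type in the list. -/
def mkLams : (l : List Ty) → ℕ → Tm → Tm
  | [], _, body => body
  | σ :: l, k, body => .lam k σ (mkLams l (k + 1) body)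

/-- The body of the quote term
`↓_{σ₁…σₙB} a := λx₁…xₙ. ⋁_{b₁…bₙ, a b₁…bₙ = 1} ⋀_j x_j ≐_{σ_j} (↓_{σ_j} b_j)`. -/
noncomputable def quoteBodyAux (σ : Ty) (ad : ArgData σ.args) (a : σ.sem) : Tm :=
  mkLams σ.args 0 (orList
    ((((Finset.univ : Finset (Tup σ.args)).toList.filter
        (fun b => σ.applyTup a b))).map
      (fun b => andList (eqConj σ.args ad 0 b))))

/-- `∀σ := λf. ⋀_{a ∈ Bσ} f (↓σ a)`, given the quote function for `σ`. -/
noncomputable def allTmAux (σ : Ty) (q : σ.sem → Tm) : Tm :=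
  .lam 0 (.arrow σ .base)
    (andList (((Finset.univ : Finset σ.sem).toList).map
      (fun a => .app (vr 0 (.arrow σ .base)) (q a))))

mutual
  /-- The quote function `↓σ` together with the identity term `≐σ`. -/
  noncomputable def quoteEq : (σ : Ty) → ((σ.sem → Tm) × Tm)
    | .base =>
        (fun a => quoteBodyAux .base PUnit.unit a,
         .lam 0 .base (.lam 1 .base (equivTm (vr 0 .base) (vr 1 .base))))
    | .arrow σ τ =>
        (fun a => quoteBodyAux (.arrow σ τ) ((quoteEq σ, argData τ) : ArgData (σ :: τ.args)) a,
         .lam 0 (.arrow σ τ) (.lam 1 (.arrow σ τ)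
           (.app (allTmAux σ (quoteEq σ).1)
             (.lam 2 σ
               (.app (.app (quoteEq τ).2
                  (.app (vr 0 (.arrow σ τ)) (vr 2 σ)))
                (.app (vr 1 (.arrow σ τ)) (vr 2 σ)))))))
  /-- Quote/identity data for all argument types of a type. -/
  noncomputable def argData : (σ : Ty) → ArgData σ.args
    | .base => PUnit.unit
    | .arrow σ τ => ((quoteEq σ, argData τ) : ArgData (σ :: τ.args))
end

/-- The quote function `↓σ : Bσ → Λ`. -/
noncomputable def quote (σ : Ty) (a : σ.sem) : Tm := (quoteEq σ).1 a

/-- The term `≐σ : σσB` denoting the identity predicate on `Bσ`. -/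
noncomputable def eqTm (σ : Ty) : Tm := (quoteEq σ).2

/-- The term `∀σ : (σB)B`. -/
noncomputable def allTm (σ : Ty) : Tm := allTmAux σ (quote σ)


/-- Propositional formulas: `s ::= x | ⊥ | s → s` with `x` a variable of type `B`. -/
inductive Propositional : Tm → Prop
  | var (n : ℕ) : Propositional (vr n .base)
  | bot : Propositional botTm
  | imp {s t} : Propositional s → Propositional t → Propositional (impTm s t)

/-- A type-respecting substitution of terms for variables. -/
def IsSubstitution (ρ : ℕ × Ty → Tm) : Prop := ∀ n σ, HasTy (ρ (n, σ)) σ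

/-- A formula is tautologous if it is a substitution instance of a tautology
(a valid propositional formula). -/
def Tautologous (s : Tm) : Prop :=
  ∃ t ρ, Propositional t ∧ ValidFml t ∧ IsSubstitution ρ ∧ s = substAux ρ t

/-- The proof system: Triv, Weak, Ded, MP, DN, Lam and Boolean replacement (BR).
Sequents consist of a finite set of formulas and a formula. -/
inductive Ded : Finset Tm → Tm → Prop
  | triv {A s} : (∀ t ∈ A, HasTy t .base) → HasTy s .base → Ded (insert s A) s
  | weak {A s t} : HasTy s .base → Ded A t → Ded (insert s A) t
  | ded {A s t} : Ded (insert s A) t → Ded A (impTm s t)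
  | mp {A s t} : Ded A (impTm s t) → Ded A s → Ded A t
  | dn {A s} : Ded A (negTm (negTm s)) → Ded A s
  | lam {A s t} : Ded A s → LamEq s t → HasTy t .base → Ded A t
  | br {A s t} (C : Ctx) : C.Admissible A → Ded A (equivTm s t) →
      Ded A (C.fill s) → HasTy (C.fill t) .base → Ded A (C.fill t)


lemma subterm_refl (s : Tm) : Subterm s s := ⟨.hole, rfl⟩

lemma subterm_appL {w u v : Tm} (h : Subterm w u) : Subterm w (.app u v) := by
  obtain ⟨C, hC⟩ := h
  exact ⟨.appL C v, by simp [Ctx.fill, hC]⟩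

lemma subterm_appR {w u v : Tm} (h : Subterm w v) : Subterm w (.app u v) := by
  obtain ⟨C, hC⟩ := h
  exact ⟨.appR u C, by simp [Ctx.fill, hC]⟩

lemma subterm_app_elim {w u v : Tm} (h : Subterm w (.app u v)) :
    w = .app u v ∨ Subterm w u ∨ Subterm w v := by
  obtain ⟨C, hC⟩ := h
  cases C with
  | hole => exact Or.inl hC
  | lam n σ C => simp [Ctx.fill] at hC
  | appL C t =>
      simp only [Ctx.fill] at hC
      injection hC with h1 h2
      exact Or.inr (Or.inl ⟨C, h1⟩)
  | appR t C =>
      simp only [Ctx.fill] at hC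
      injection hC with h1 h2
      exact Or.inr (Or.inr ⟨C, h2⟩)

lemma subterm_name_elim {w : Tm} {x : Name} (h : Subterm w (.name x)) : w = .name x := by
  obtain ⟨C, hC⟩ := h
  cases C <;> simp [Ctx.fill] at hC
  exact hC

lemma closed_app {u v : Tm} (h : Closed (.app u v)) : Closed u ∧ Closed v := by
  simp only [Closed, fv, Finset.union_eq_empty] at h
  exact h

lemma normal_app {u v : Tm} (h : BetaNormal (.app u v)) : BetaNormal u ∧ BetaNormal v :=
  ⟨fun w hw => h w (subterm_appL hw), fun w hw => h w (subterm_appR hw)⟩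

lemma hasTy_name_inv {x : Name} {σ : Ty} (h : HasTy (.name x) σ) : σ = x.ty := by
  cases h; rfl

lemma hasTy_app_inv {u v : Tm} {τ : Ty} (h : HasTy (.app u v) τ) :
    ∃ σ, HasTy u (.arrow σ τ) ∧ HasTy v σ := by
  cases h with | app h1 h2 => exact ⟨_, h1, h2⟩

lemma not_lam_of_normal {u v : Tm} (h : BetaNormal (.app u v)) :
    ∀ n σ t, u ≠ .lam n σ t := by
  intro n σ t he; subst he
  exact h _ (subterm_refl _) trivial

lemma funpos : ∀ (u : Tm), Closed u → BetaNormal u → (∀ n σ t, u ≠ .lam n σ t) →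
    ∀ σ τ : Ty, HasTy u (.arrow σ τ) →
    (u = .name .imp ∧ σ = .base ∧ τ = .arrow .base .base) ∨
    ∃ a, u = .app (.name .imp) a ∧ σ = .base ∧ τ = .base ∧
      HasTy a .base ∧ Closed a ∧ BetaNormal a
  | .name x, hc, _, _, σ, τ, hty => by
      have h := hasTy_name_inv hty
      cases x with
      | bot => simp [Name.ty] at h
      | imp =>
          simp only [Name.ty] at h
          injection h with h1 h2
          exact Or.inl ⟨rfl, h1, h2⟩
      | var n ρ => simp [Closed, fv] at hc
  | .lam n ρ t, _, _, hl, _, _, _ => absurd rfl (hl n ρ t)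
  | .app u' v', hc, hn, _, σ, τ, hty => by
      obtain ⟨hc1, hc2⟩ := closed_app hc
      obtain ⟨hn1, hn2⟩ := normal_app hn
      obtain ⟨σ', h1, h2⟩ := hasTy_app_inv hty
      have hnl : ∀ n ρ t, u' ≠ Tm.lam n ρ t := not_lam_of_normal hn
      rcases funpos u' hc1 hn1 hnl _ _ h1 with ⟨he, hσ', ht⟩ | ⟨a, _, _, ht, _, _, _⟩
      · injection ht with ht1 ht2
        subst he hσ' ht1 ht2
        exact Or.inr ⟨v', rfl, rfl, rfl, h2, hc2, hn2⟩
      · cases ht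

def siz : Tm → ℕ
  | .name _ => 1
  | .lam _ _ t => siz t + 1
  | .app u v => siz u + siz v + 1

/-- every closed β-normal formula is propositional (and in fact
contains no variables at all). -/
theorem closed_normal_propositional (s : Tm) (hty : HasTy s .base)
    (hclosed : Closed s) (hnorm : BetaNormal s) :
    Propositional s ∧ ∀ (n : ℕ) (σ : Ty), ¬ Subterm (vr n σ) s := by
  have key : ∀ N s, siz s ≤ N → HasTy s .base → Closed s → BetaNormal s →
      Propositional s ∧ ∀ (n : ℕ) (σ : Ty), ¬ Subterm (vr n σ) s := by
    intro N
    induction N with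
    | zero => intro s hs; cases s <;> simp [siz] at hs
    | succ N IH =>
      intro s hs hty hc hn
      cases s with
      | name x =>
        cases x with
        | bot =>
            refine ⟨Propositional.bot, ?_⟩
            intro n σ h
            have := subterm_name_elim h
            simp [vr] at this
        | imp => exact absurd (hasTy_name_inv hty) (by simp [Name.ty])
        | var n ρ => simp [Closed, fv] at hc
      | lam n ρ t => cases hty
      | app u v =>
        obtain ⟨σ, h1, h2⟩ := hasTy_app_inv hty
        obtain ⟨hc1, hc2⟩ := closed_app hc
        obtain ⟨hn1, hn2⟩ := normal_app hn
        rcases funpos u hc1 hn1 (not_lam_of_normal hn) _ _ h1 with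
          ⟨he, _, ht⟩ | ⟨a, he, hσ, _, hta, hca, hna⟩
        · subst he
          have := hasTy_name_inv h1
          simp only [Name.ty] at this
          injection this with _ h'
          cases h'
        · subst he hσ
          have hsa : siz a ≤ N := by simp [siz] at hs ⊢; omega
          have hsv : siz v ≤ N := by simp [siz] at hs ⊢; omega
          obtain ⟨pa, va⟩ := IH a hsa hta hca hna
          obtain ⟨pv, vv⟩ := IH v hsv h2 hc2 hn2
          refine ⟨Propositional.imp pa pv, ?_⟩
          intro n σ h
          rcases subterm_app_elim h with h | h | h
          · simp [vr] at h
          · rcases subterm_app_elim h with h | h | h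
            · simp [vr] at h
            · have := subterm_name_elim h; simp [vr] at this
            · exact va n σ h
          · exact vv n σ h
  exact key (siz s) s le_rfl hty hclosed hnorm


end PTT
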